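/- arXiv:1004.4921 — 3 statements merged into one kernel-verified Lean document; each statement's English description precedes it below -/
import Mathlib

section
/- With the ILS data and M₁, M₂ as in the context, let a > 0 and β > 0 be normalizing scalars, and assume x ≠ 0, r ≠ 0, and M₁ − M₂ ≠ 0. Define χ_A = (a/‖x‖₂)·‖M₁ − M₂‖₂, ℬ = (a/‖x‖₂)·(‖M₁‖₂ + ‖M₂‖₂), χ_b = β·‖M₂‖₂/‖x‖₂², ρ = (ℬ + χ_b)/(χ_A + χ_b), λ₁ = (‖M₁‖₂ + ‖M₂‖₂)/‖M₁ − M₂‖₂, and λ₂ = a·‖x‖₂/β. Then λ₁ ≥ ρ, λ₂ ≥ ρ/2 − 1, and at least one of the two inequalities 2ρ ≥ λ₁ and ρ + 1/2 ≥ λ₂ holds. -/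
/-!
With `s = ‖x‖₂`, `N₁ = ‖M₁‖₂`, `N₂ = ‖M₂‖₂`, `D = ‖M₁ − M₂‖₂`, one has `ℬ = λ₁ χ_A` and
`λ₂ χ_b = a N₂ / s`. The triangle inequalities `N₁ ≤ D + N₂` and `N₂ ≤ N₁ + D` then read
`ℬ ≤ χ_A + 2 λ₂ χ_b` and `2 λ₂ χ_b − χ_A ≤ ℬ`, and `D ≤ N₁ + N₂` reads `λ₁ ≥ 1`.
All three claims are elementary consequences of these facts about the ratio
`ρ = (ℬ + χ_b) / (χ_A + χ_b)`, the last one after splitting on which of `χ_A`, `χ_b` is larger.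
-/

open Matrix

/-- Euclidean (ℓ²) norm of a vector. -/
noncomputable def eNorm {p : Type*} [Fintype p] (v : p → ℝ) : ℝ :=
  Real.sqrt (∑ i, (v i) ^ 2)

/-- Frobenius norm of a matrix. -/
noncomputable def frobNorm {p q : Type*} [Fintype p] [Fintype q]
    (M : Matrix p q ℝ) : ℝ :=
  Real.sqrt (∑ i, ∑ j, (M i j) ^ 2)

/-- Spectral (ℓ² operator) norm of a matrix. -/
noncomputable def specNorm {p q : Type*} [Fintype p] [Fintype q] [DecidableEq q]
    (M : Matrix p q ℝ) : ℝ :=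
  ‖LinearMap.toContinuousLinearMap (Matrix.toEuclideanLin M)‖

/-- Solution of the indefinite least squares problem: `x = (AᵀJA)⁻¹AᵀJb`. -/
noncomputable def ilsX {m n : ℕ} (A : Matrix (Fin m) (Fin n) ℝ)
    (J : Matrix (Fin m) (Fin m) ℝ) (b : Fin m → ℝ) : Fin n → ℝ :=
  ((Aᵀ * J * A)⁻¹ * Aᵀ * J) *ᵥ b

/-- Residual of the indefinite least squares problem: `r = b - Ax`. -/
noncomputable def ilsR {m n : ℕ} (A : Matrix (Fin m) (Fin n) ℝ)
    (J : Matrix (Fin m) (Fin m) ℝ) (b : Fin m → ℝ) : Fin m → ℝ :=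
  b - A *ᵥ (ilsX A J b)

/-- `M₁ = (AᵀJA)⁻¹ ⊗ (Jr)ᵀ`, realized as an `n × (n·m)` matrix whose column
index `(j, k)` corresponds to entry `(k, j)` of the perturbation matrix. -/
noncomputable def ilsM1 {m n : ℕ} (A : Matrix (Fin m) (Fin n) ℝ)
    (J : Matrix (Fin m) (Fin m) ℝ) (b : Fin m → ℝ) :
    Matrix (Fin n) (Fin n × Fin m) ℝ :=
  Matrix.of fun i jk => (Aᵀ * J * A)⁻¹ i jk.1 * (J *ᵥ (ilsR A J b)) jk.2

/-- `M₂ = xᵀ ⊗ (AᵀJA)⁻¹AᵀJ`, realized as an `n × (n·m)` matrix. -/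
noncomputable def ilsM2 {m n : ℕ} (A : Matrix (Fin m) (Fin n) ℝ)
    (J : Matrix (Fin m) (Fin m) ℝ) (b : Fin m → ℝ) :
    Matrix (Fin n) (Fin n × Fin m) ℝ :=
  Matrix.of fun i jk => (ilsX A J b) jk.1 * ((Aᵀ * J * A)⁻¹ * Aᵀ * J) i jk.2

section SpecNorm

variable {p q : Type*} [Fintype p] [Fintype q] [DecidableEq q]

lemma specNorm_nonneg (M : Matrix p q ℝ) : 0 ≤ specNorm M := norm_nonneg _

lemma specNorm_pos {M : Matrix p q ℝ} (hM : M ≠ 0) : 0 < specNorm M := by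
  simpa [specNorm, norm_pos_iff] using hM

lemma specNorm_sub_le (M N : Matrix p q ℝ) : specNorm (M - N) ≤ specNorm M + specNorm N := by
  simpa only [specNorm, map_sub] using norm_sub_le _ _

lemma specNorm_le_specNorm_sub_add (M N : Matrix p q ℝ) :
    specNorm M ≤ specNorm (M - N) + specNorm N := by
  simpa only [specNorm, map_sub] using norm_le_norm_sub_add _ _

lemma specNorm_le_specNorm_add_specNorm_sub (M N : Matrix p q ℝ) :
    specNorm N ≤ specNorm M + specNorm (M - N) := by
  simpa only [specNorm, map_sub] using norm_le_norm_add_norm_sub _ _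

end SpecNorm

lemma eNorm_pos {p : Type*} [Fintype p] {v : p → ℝ} (hv : v ≠ 0) : 0 < eNorm v := by
  have h : eNorm v = ‖WithLp.toLp 2 v‖ := by simp [eNorm, EuclideanSpace.norm_eq]
  simpa [h] using hv

namespace ILS

variable {χA χb ℬ lam₁ lam₂ : ℝ}

lemma ratio_le_lam₁ (hχA : 0 < χA) (hχb : 0 ≤ χb) (hlam₁ : 1 ≤ lam₁) (hℬ : ℬ = lam₁ * χA) :
    (ℬ + χb) / (χA + χb) ≤ lam₁ := by
  rw [div_le_iff₀ (by linarith), hℬ]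
  nlinarith

lemma ratio_le_two_mul_lam₂_add_one (hχA : 0 < χA) (hχb : 0 ≤ χb) (hlam₂ : 0 ≤ lam₂)
    (hℬ : ℬ ≤ χA + 2 * (lam₂ * χb)) :
    (ℬ + χb) / (χA + χb) ≤ 2 * lam₂ + 1 := by
  rw [div_le_iff₀ (by linarith)]
  nlinarith [mul_nonneg hlam₂ hχA.le]

lemma lam₁_le_two_mul_ratio (hχA : 0 < χA) (hχb : 0 ≤ χb) (hlam₁ : 0 ≤ lam₁)
    (hℬ : ℬ = lam₁ * χA) (hle : χb ≤ χA) : lam₁ ≤ 2 * ((ℬ + χb) / (χA + χb)) := by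
  rw [hℬ, ← mul_div_assoc, le_div_iff₀ (by linarith)]
  nlinarith [mul_le_mul_of_nonneg_left hle hlam₁]

lemma lam₂_le_ratio_add_half (hχA : 0 < χA) (hlam₂ : 0 ≤ lam₂)
    (hℬ : 2 * (lam₂ * χb) - χA ≤ ℬ) (hle : χA ≤ χb) :
    lam₂ ≤ (ℬ + χb) / (χA + χb) + 1 / 2 := by
  rw [← sub_le_iff_le_add, le_div_iff₀ (by linarith)]
  nlinarith [mul_le_mul_of_nonneg_left hle hlam₂]

end ILS

theorem stmt_3_general (m n : ℕ)
    (A : Matrix (Fin m) (Fin n) ℝ) (b : Fin m → ℝ)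
    (J : Matrix (Fin m) (Fin m) ℝ)
    (a β : ℝ) (ha : 0 < a) (hβ : 0 < β)
    (hx : ilsX A J b ≠ 0)
    (hM : ilsM1 A J b - ilsM2 A J b ≠ 0)
    (χA ℬ χb ρ lam₁ lam₂ : ℝ)
    (hχA : χA = (a / eNorm (ilsX A J b)) * specNorm (ilsM1 A J b - ilsM2 A J b))
    (hℬ : ℬ = (a / eNorm (ilsX A J b)) * (specNorm (ilsM1 A J b) + specNorm (ilsM2 A J b)))
    (hχb : χb = β * specNorm (ilsM2 A J b) / (eNorm (ilsX A J b)) ^ 2)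
    (hρ : ρ = (ℬ + χb) / (χA + χb))
    (hlam₁ : lam₁ = (specNorm (ilsM1 A J b) + specNorm (ilsM2 A J b)) /
      specNorm (ilsM1 A J b - ilsM2 A J b))
    (hlam₂ : lam₂ = a * eNorm (ilsX A J b) / β) :
    ρ ≤ lam₁ ∧ ρ / 2 - 1 ≤ lam₂ ∧ (lam₁ ≤ 2 * ρ ∨ lam₂ ≤ ρ + 1 / 2) := by
  set s := eNorm (ilsX A J b)
  set N₁ := specNorm (ilsM1 A J b)
  set N₂ := specNorm (ilsM2 A J b)
  set D := specNorm (ilsM1 A J b - ilsM2 A J b)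
  have hs : 0 < s := eNorm_pos hx
  have hD : 0 < D := specNorm_pos hM
  have has : 0 ≤ a / s := by positivity
  have hχA0 : 0 < χA := hχA ▸ by positivity
  have hχb0 : 0 ≤ χb := hχb ▸ div_nonneg (mul_nonneg hβ.le (specNorm_nonneg _)) (sq_nonneg s)
  have hlam₂0 : 0 ≤ lam₂ := hlam₂ ▸ by positivity
  have hlam₁1 : 1 ≤ lam₁ := hlam₁ ▸ (one_le_div hD).mpr (specNorm_sub_le _ _)
  have hℬ_eq : ℬ = lam₁ * χA := by rw [hℬ, hlam₁, hχA]; field_simp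
  have hcross : lam₂ * χb = a / s * N₂ := by rw [hlam₂, hχb]; field_simp
  have hℬ_le : ℬ ≤ χA + 2 * (lam₂ * χb) := by
    have hN₁ : N₁ ≤ D + N₂ := specNorm_le_specNorm_sub_add _ _
    rw [hℬ, hχA, hcross]
    linarith [mul_le_mul_of_nonneg_left hN₁ has]
  have hℬ_ge : 2 * (lam₂ * χb) - χA ≤ ℬ := by
    have hN₂ : N₂ ≤ N₁ + D := specNorm_le_specNorm_add_specNorm_sub _ _
    rw [hℬ, hχA, hcross]
    linarith [mul_le_mul_of_nonneg_left hN₂ has]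
  subst hρ
  refine ⟨ILS.ratio_le_lam₁ hχA0 hχb0 hlam₁1 hℬ_eq, ?_, ?_⟩
  · linarith [ILS.ratio_le_two_mul_lam₂_add_one hχA0 hχb0 hlam₂0 hℬ_le]
  · rcases le_total χb χA with h | h
    · exact .inl (ILS.lam₁_le_two_mul_ratio hχA0 hχb0 (by linarith) hℬ_eq h)
    · exact .inr (ILS.lam₂_le_ratio_add_half hχA0 hlam₂0 hℬ_ge h)

/-- Theorem 3.3 of the paper: relations among `ρ`, `λ₁`, `λ₂` that characterize
when the Bojanczyk–Higham–Patel bound is an overestimate. -/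
theorem stmt_3 (m n : ℕ) (hmn : m > n) (hn : n ≥ 1)
    (A : Matrix (Fin m) (Fin n) ℝ) (b : Fin m → ℝ)
    (d : Fin m → ℝ) (hd : ∀ i, d i = 1 ∨ d i = -1)
    (J : Matrix (Fin m) (Fin m) ℝ) (hJ : J = Matrix.diagonal d)
    (hpd : (Aᵀ * J * A).PosDef)
    (a β : ℝ) (ha : 0 < a) (hβ : 0 < β)
    (hx : ilsX A J b ≠ 0) (hr : ilsR A J b ≠ 0)
    (hM : ilsM1 A J b - ilsM2 A J b ≠ 0)
    (χA ℬ χb ρ lam₁ lam₂ : ℝ)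
    (hχA : χA = (a / eNorm (ilsX A J b)) * specNorm (ilsM1 A J b - ilsM2 A J b))
    (hℬ : ℬ = (a / eNorm (ilsX A J b)) * (specNorm (ilsM1 A J b) + specNorm (ilsM2 A J b)))
    (hχb : χb = β * specNorm (ilsM2 A J b) / (eNorm (ilsX A J b)) ^ 2)
    (hρ : ρ = (ℬ + χb) / (χA + χb))
    (hlam₁ : lam₁ = (specNorm (ilsM1 A J b) + specNorm (ilsM2 A J b)) /
      specNorm (ilsM1 A J b - ilsM2 A J b))
    (hlam₂ : lam₂ = a * eNorm (ilsX A J b) / β) :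
    ρ ≤ lam₁ ∧ ρ / 2 - 1 ≤ lam₂ ∧ (lam₁ ≤ 2 * ρ ∨ lam₂ ≤ ρ + 1 / 2) :=
  stmt_3_general m n A b J a β ha hβ hx hM χA ℬ χb ρ lam₁ lam₂ hχA hℬ hχb hρ hlam₁ hlam₂
end

section
/- With the ILS data as in the context, the map f from real m×n matrices to ℝⁿ defined by f(M) = (MᵀJM)⁻¹MᵀJb is Fréchet differentiable at A, and its derivative at A is the linear map ΔA ↦ (AᵀJA)⁻¹(ΔAᵀJr) − (AᵀJA)⁻¹AᵀJ(ΔA·x), where r = b − Ax and x = f(A). -/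
open Matrix

attribute [local instance]
  Matrix.frobeniusSeminormedAddCommGroup
  Matrix.frobeniusNormedAddCommGroup
  Matrix.frobeniusNormedSpace

/-! Write `f(M) = G(M)⁻¹ (MᵀJ) b` with `G(M) = MᵀJM`. The product rule and
`d(G⁻¹) = -G⁻¹ dG G⁻¹` give, with `S = AᵀJA`, `df(ΔA) = S⁻¹ΔAᵀJb - S⁻¹(ΔAᵀJA + AᵀJΔA)x`;
collecting the two `ΔAᵀ` terms into `S⁻¹ΔAᵀJ(b - Ax) = S⁻¹ΔAᵀJr` gives the stated derivative. -/

attribute [local instance] Matrix.frobeniusNormedRing Matrix.frobeniusNormedAlgebra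

section MatrixCalculus

variable {E : Type*} [NormedAddCommGroup E] [NormedSpace ℝ E] {x : E}
  {l m n : Type*} [Fintype l] [Fintype m] [Fintype n]

theorem HasFDerivAt.matrix_transpose {f : E → Matrix m n ℝ} {f' : E →L[ℝ] Matrix m n ℝ}
    (hf : HasFDerivAt f f' x) :
    HasFDerivAt (fun y => (f y)ᵀ)
      ((transposeLinearEquiv m n ℝ ℝ).toLinearMap.toContinuousLinearMap.comp f') x := by
  exact (transposeLinearEquiv m n ℝ ℝ).toLinearMap.toContinuousLinearMap.hasFDerivAt.comp x hf

theorem DifferentiableAt.matrix_transpose {f : E → Matrix m n ℝ} (hf : DifferentiableAt ℝ f x) :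
    DifferentiableAt ℝ (fun y => (f y)ᵀ) x :=
  hf.hasFDerivAt.matrix_transpose.differentiableAt

theorem fderiv_matrix_transpose_apply {f : E → Matrix m n ℝ} (hf : DifferentiableAt ℝ f x)
    (v : E) : fderiv ℝ (fun y => (f y)ᵀ) x v = (fderiv ℝ f x v)ᵀ :=
  DFunLike.congr_fun hf.hasFDerivAt.matrix_transpose.fderiv v

theorem HasFDerivAt.mulVec_const {f : E → Matrix m n ℝ} {f' : E →L[ℝ] Matrix m n ℝ}
    (hf : HasFDerivAt f f' x) (b : n → ℝ) :
    HasFDerivAt (fun y => f y *ᵥ b) (((mulVecBilin ℝ ℝ).flip b).toContinuousLinearMap.comp f') x := by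
  exact ((mulVecBilin ℝ ℝ).flip b).toContinuousLinearMap.hasFDerivAt.comp x hf

theorem DifferentiableAt.mulVec_const {f : E → Matrix m n ℝ} (hf : DifferentiableAt ℝ f x)
    (b : n → ℝ) : DifferentiableAt ℝ (fun y => f y *ᵥ b) x :=
  (hf.hasFDerivAt.mulVec_const b).differentiableAt

theorem fderiv_mulVec_const_apply {f : E → Matrix m n ℝ} (hf : DifferentiableAt ℝ f x)
    (b : n → ℝ) (v : E) : fderiv ℝ (fun y => f y *ᵥ b) x v = fderiv ℝ f x v *ᵥ b :=
  DFunLike.congr_fun (hf.hasFDerivAt.mulVec_const b).fderiv v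

noncomputable def Matrix.mulCLM : Matrix l m ℝ →L[ℝ] Matrix m n ℝ →L[ℝ] Matrix l n ℝ :=
  (mulLinearMap ℝ).toContinuousBilinearMap

theorem HasFDerivAt.matrix_mul {f : E → Matrix l m ℝ} {g : E → Matrix m n ℝ}
    {f' : E →L[ℝ] Matrix l m ℝ} {g' : E →L[ℝ] Matrix m n ℝ}
    (hf : HasFDerivAt f f' x) (hg : HasFDerivAt g g' x) :
    HasFDerivAt (fun y => f y * g y) (mulCLM.precompR E (f x) g' + mulCLM.precompL E f' (g x)) x :=
  mulCLM.hasFDerivAt_of_bilinear hf hg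

theorem DifferentiableAt.matrix_mul {f : E → Matrix l m ℝ} {g : E → Matrix m n ℝ}
    (hf : DifferentiableAt ℝ f x) (hg : DifferentiableAt ℝ g x) :
    DifferentiableAt ℝ (fun y => f y * g y) x :=
  (hf.hasFDerivAt.matrix_mul hg.hasFDerivAt).differentiableAt

theorem fderiv_matrix_mul_apply {f : E → Matrix l m ℝ} {g : E → Matrix m n ℝ}
    (hf : DifferentiableAt ℝ f x) (hg : DifferentiableAt ℝ g x) (v : E) :
    fderiv ℝ (fun y => f y * g y) x v = f x * fderiv ℝ g x v + fderiv ℝ f x v * g x :=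
  DFunLike.congr_fun (hf.hasFDerivAt.matrix_mul hg.hasFDerivAt).fderiv v

variable [DecidableEq n] {f : E → Matrix n n ℝ}

theorem HasFDerivAt.matrix_inv {f' : E →L[ℝ] Matrix n n ℝ} (hf : HasFDerivAt f f' x)
    (hx : IsUnit (f x)) :
    HasFDerivAt (fun y => (f y)⁻¹)
      ((-ContinuousLinearMap.mulLeftRight ℝ _ (f x)⁻¹ (f x)⁻¹).comp f') x := by
  have hinv : ((hx.unit⁻¹ : (Matrix n n ℝ)ˣ) : Matrix n n ℝ) = (f x)⁻¹ := by
    rw [coe_units_inv, hx.unit_spec]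
  have h := (hasFDerivAt_ringInverse hx.unit).comp x hf
  rw [hinv] at h
  rw [show (fun y => (f y)⁻¹) = Ring.inverse ∘ f from
    funext fun y => nonsing_inv_eq_ringInverse (f y)]
  exact h

theorem DifferentiableAt.matrix_inv (hf : DifferentiableAt ℝ f x) (hx : IsUnit (f x)) :
    DifferentiableAt ℝ (fun y => (f y)⁻¹) x :=
  (hf.hasFDerivAt.matrix_inv hx).differentiableAt

theorem fderiv_matrix_inv_apply (hf : DifferentiableAt ℝ f x) (hx : IsUnit (f x)) (v : E) :
    fderiv ℝ (fun y => (f y)⁻¹) x v = -((f x)⁻¹ * fderiv ℝ f x v * (f x)⁻¹) :=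
  DFunLike.congr_fun (hf.hasFDerivAt.matrix_inv hx).fderiv v

end MatrixCalculus

theorem ilsX_eq {m n : ℕ} (A : Matrix (Fin m) (Fin n) ℝ) (J : Matrix (Fin m) (Fin m) ℝ)
    (b : Fin m → ℝ) : ilsX A J b = ((Aᵀ * J * A)⁻¹ * (Aᵀ * J)) *ᵥ b := by
  rw [ilsX, Matrix.mul_assoc]

section ILS

variable {m n : ℕ} {A : Matrix (Fin m) (Fin n) ℝ} {J : Matrix (Fin m) (Fin m) ℝ} {b : Fin m → ℝ}

theorem differentiableAt_ilsX (hA : IsUnit (Aᵀ * J * A)) :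
    DifferentiableAt ℝ (fun M => ilsX M J b) A := by
  have hT : DifferentiableAt ℝ (fun M : Matrix (Fin m) (Fin n) ℝ => Mᵀ * J) A :=
    differentiableAt_fun_id.matrix_transpose.matrix_mul (differentiableAt_const J)
  simp only [ilsX_eq]
  exact (((hT.matrix_mul differentiableAt_fun_id).matrix_inv hA).matrix_mul hT).mulVec_const b

theorem fderiv_ilsX_apply (hA : IsUnit (Aᵀ * J * A)) (ΔA : Matrix (Fin m) (Fin n) ℝ) :
    fderiv ℝ (fun M => ilsX M J b) A ΔA = (Aᵀ * J * A)⁻¹ *ᵥ (ΔAᵀ *ᵥ (J *ᵥ ilsR A J b))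
      - ((Aᵀ * J * A)⁻¹ * Aᵀ * J) *ᵥ (ΔA *ᵥ ilsX A J b) := by
  have hT : DifferentiableAt ℝ (fun M : Matrix (Fin m) (Fin n) ℝ => Mᵀ * J) A :=
    differentiableAt_fun_id.matrix_transpose.matrix_mul (differentiableAt_const J)
  have hG : DifferentiableAt ℝ (fun M : Matrix (Fin m) (Fin n) ℝ => Mᵀ * J * M) A :=
    hT.matrix_mul differentiableAt_fun_id
  have hGinv : DifferentiableAt ℝ (fun M : Matrix (Fin m) (Fin n) ℝ => (Mᵀ * J * M)⁻¹) A :=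
    hG.matrix_inv hA
  simp only [ilsX_eq]
  refine (fderiv_mulVec_const_apply (hGinv.matrix_mul hT) b ΔA).trans ?_
  rw [fderiv_matrix_mul_apply hGinv hT, fderiv_matrix_inv_apply hG hA,
    fderiv_matrix_mul_apply hT differentiableAt_fun_id,
    fderiv_matrix_mul_apply differentiableAt_fun_id.matrix_transpose (differentiableAt_const J),
    fderiv_matrix_transpose_apply differentiableAt_fun_id, fderiv_const_apply]
  simp only [_root_.zero_apply, Matrix.mul_zero, zero_add]
  -- The identity's `fderiv` here has the Frobenius topology on its domain but the product
  -- topology on its codomain; the two agree only up to unfolding, hence `erw`.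
  erw [fderiv_fun_id, ContinuousLinearMap.id_apply]
  simp only [ilsR, ilsX_eq, Matrix.mulVec_mulVec,
    Matrix.mulVec_sub, Matrix.add_mulVec, Matrix.neg_mulVec, Matrix.add_mul, Matrix.mul_add,
    Matrix.neg_mul, Matrix.mul_assoc]
  abel

end ILS

theorem stmt_4_general (m n : ℕ)
    (A : Matrix (Fin m) (Fin n) ℝ) (b : Fin m → ℝ)
    (J : Matrix (Fin m) (Fin m) ℝ)
    (hpd : (Aᵀ * J * A).PosDef) :
    ∃ L : Matrix (Fin m) (Fin n) ℝ →L[ℝ] EuclideanSpace ℝ (Fin n),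
      HasFDerivAt
        (fun M : Matrix (Fin m) (Fin n) ℝ =>
          ((WithLp.equiv 2 (Fin n → ℝ)).symm (ilsX M J b) : EuclideanSpace ℝ (Fin n)))
        L A ∧
      ∀ ΔA : Matrix (Fin m) (Fin n) ℝ,
        L ΔA = (WithLp.equiv 2 (Fin n → ℝ)).symm
          ((Aᵀ * J * A)⁻¹ *ᵥ (ΔAᵀ *ᵥ (J *ᵥ ilsR A J b))
            - ((Aᵀ * J * A)⁻¹ * Aᵀ * J) *ᵥ (ΔA *ᵥ ilsX A J b)) := by
  let e := (EuclideanSpace.equiv (Fin n) ℝ).symm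
  refine ⟨(e : (Fin n → ℝ) →L[ℝ] EuclideanSpace ℝ (Fin n)).comp
    (fderiv ℝ (fun M => ilsX M J b) A), ?_, fun ΔA => ?_⟩
  · exact e.hasFDerivAt.comp A (differentiableAt_ilsX hpd.isUnit).hasFDerivAt
  · exact congrArg e (fderiv_ilsX_apply hpd.isUnit ΔA)

/-- The map `f(M) = (MᵀJM)⁻¹MᵀJb` is Fréchet differentiable at `A`, with
derivative `ΔA ↦ (AᵀJA)⁻¹(ΔAᵀJr) − (AᵀJA)⁻¹AᵀJ(ΔA·x)`. -/
theorem stmt_4 (m n : ℕ) (hmn : m > n) (hn : n ≥ 1)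
    (A : Matrix (Fin m) (Fin n) ℝ) (b : Fin m → ℝ)
    (d : Fin m → ℝ) (hd : ∀ i, d i = 1 ∨ d i = -1)
    (J : Matrix (Fin m) (Fin m) ℝ) (hJ : J = Matrix.diagonal d)
    (hpd : (Aᵀ * J * A).PosDef) :
    ∃ L : Matrix (Fin m) (Fin n) ℝ →L[ℝ] EuclideanSpace ℝ (Fin n),
      HasFDerivAt
        (fun M : Matrix (Fin m) (Fin n) ℝ =>
          ((WithLp.equiv 2 (Fin n → ℝ)).symm (ilsX M J b) : EuclideanSpace ℝ (Fin n)))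
        L A ∧
      ∀ ΔA : Matrix (Fin m) (Fin n) ℝ,
        L ΔA = (WithLp.equiv 2 (Fin n → ℝ)).symm
          ((Aᵀ * J * A)⁻¹ *ᵥ (ΔAᵀ *ᵥ (J *ᵥ ilsR A J b))
            - ((Aᵀ * J * A)⁻¹ * Aᵀ * J) *ᵥ (ΔA *ᵥ ilsX A J b)) :=
  stmt_4_general m n A b J hpd
end

section
/- With the ILS data and M₁, M₂ as in the context, there exists a real m×n matrix U with ‖U‖_F = 1 such that lim_{t→0⁺} ‖f(A + tU) − f(A)‖₂ / t = ‖M₁ − M₂‖₂, where f(M) = (MᵀJM)⁻¹MᵀJb. (That is, the coefficient ‖M₁ − M₂‖₂, the spectral norm of the Jacobian of f at A, is approximately attained by some direction of perturbation.) -/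
open Matrix

/-
Write `S = AᵀJA`. Expanding `(A + tU)ᵀJ(A + tU) = S + t(UᵀJA + AᵀJU) + t²UᵀJU` and
differentiating the matrix inverse shows that `t ↦ f(A + tU)` has derivative
`S⁻¹UᵀJr − S⁻¹AᵀJUx` at `0`, and this vector is exactly `(M₁ − M₂) vec U`. So the difference
quotient tends to `‖(M₁ − M₂) vec U‖₂`. Since the unit sphere is compact, the operator norm of
`M₁ − M₂` is attained at some unit vector, and taking `vec U` to be that vector finishes the
proof, because `‖U‖_F = ‖vec U‖₂`.
-/

open Filter Topology

theorem ContinuousLinearMap.exists_norm_eq_one_and_norm_apply_eq_opNorm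
    {E F : Type*} [NormedAddCommGroup E] [NormedSpace ℝ E] [FiniteDimensional ℝ E]
    [Nontrivial E] [NormedAddCommGroup F] [NormedSpace ℝ F] (f : E →L[ℝ] F) :
    ∃ x, ‖x‖ = 1 ∧ ‖f x‖ = ‖f‖ := by
  have hK : IsCompact ((fun x => ‖f x‖) '' Metric.sphere 0 1) :=
    (isCompact_sphere 0 1).image (by fun_prop)
  obtain ⟨x, hx, hfx⟩ :=
    hK.sSup_mem (((NormedSpace.sphere_nonempty.mpr zero_le_one).image _))
  exact ⟨x, mem_sphere_zero_iff_norm.mp hx, hfx.trans f.sSup_sphere_eq_norm⟩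

theorem HasDerivAt.tendsto_norm_sub_div_nhdsGT {E : Type*} [NormedAddCommGroup E]
    [NormedSpace ℝ E] {g : ℝ → E} {w : E} {a : ℝ} (hg : HasDerivAt g w a) :
    Tendsto (fun t => ‖g t - g a‖ / (t - a)) (𝓝[>] a) (𝓝 ‖w‖) := by
  have hslope : Tendsto (slope g a) (𝓝[>] a) (𝓝 w) :=
    (hasDerivAt_iff_tendsto_slope.mp hg).mono_left (nhdsWithin_mono _ fun _ ht => ne_of_gt ht)
  refine hslope.norm.congr' ?_
  filter_upwards [self_mem_nhdsWithin] with t ht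
  rw [slope_def_module, norm_smul, norm_inv, Real.norm_of_nonneg (sub_pos.mpr ht).le,
    inv_mul_eq_div]

section Euclidean

variable {p q : Type*} [Fintype p] [Fintype q]

theorem eNorm_eq_norm_toLp (v : p → ℝ) : eNorm v = ‖WithLp.toLp 2 v‖ := by
  simp [eNorm, EuclideanSpace.norm_eq]

theorem frobNorm_of_swap (v : q × p → ℝ) : frobNorm (Matrix.of fun i j => v (j, i)) = eNorm v := by
  rw [frobNorm, eNorm, ← Fintype.sum_prod_type']
  exact congrArg Real.sqrt (Fintype.sum_equiv (Equiv.prodComm p q) _ _ fun _ => rfl)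

theorem exists_eNorm_eq_one_and_eNorm_mulVec_eq_specNorm [DecidableEq q] [Nonempty q]
    (M : Matrix p q ℝ) : ∃ v : q → ℝ, eNorm v = 1 ∧ eNorm (M *ᵥ v) = specNorm M := by
  obtain ⟨v, hv, hMv⟩ := (LinearMap.toContinuousLinearMap (Matrix.toEuclideanLin M))
    |>.exists_norm_eq_one_and_norm_apply_eq_opNorm
  exact ⟨v.ofLp, by rwa [eNorm_eq_norm_toLp], by rwa [eNorm_eq_norm_toLp]⟩

theorem HasDerivAt.tendsto_eNorm_sub_div_nhdsGT {g : ℝ → p → ℝ} {w : p → ℝ}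
    (hg : HasDerivAt g w 0) :
    Tendsto (fun t => eNorm (g t - g 0) / t) (𝓝[>] 0) (𝓝 (eNorm w)) := by
  have hLp : HasDerivAt (fun t => WithLp.toLp 2 (g t)) (WithLp.toLp 2 w) 0 :=
    (PiLp.continuousLinearEquiv 2 ℝ (fun _ : p => ℝ)).symm.hasFDerivAt.comp_hasDerivAt 0 hg
  simpa [eNorm_eq_norm_toLp] using hLp.tendsto_norm_sub_div_nhdsGT

end Euclidean

section MatrixCalculus

-- All norms on a finite-dimensional space give the same derivatives; the ℓ∞ operator norm is
-- chosen because it makes square matrices a normed algebra.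
attribute [local instance] Matrix.linftyOpNormedRing Matrix.linftyOpNormedAlgebra
  Matrix.linftyOpNormedAddCommGroup Matrix.linftyOpNormedSpace

theorem HasDerivAt.matrix_inv {κ : Type*} [Fintype κ] [DecidableEq κ] {B : ℝ → Matrix κ κ ℝ}
    {B' : Matrix κ κ ℝ} {t : ℝ} (hB : HasDerivAt B B' t) (hBt : IsUnit (B t)) :
    HasDerivAt (fun s => (B s)⁻¹) (-((B t)⁻¹ * B' * (B t)⁻¹)) t := by
  obtain ⟨u, hu⟩ := hBt
  have h := (hu ▸ hasFDerivAt_ringInverse (𝕜 := ℝ) u).comp_hasDerivAt t hB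
  rw [show (fun s => (B s)⁻¹) = Ring.inverse ∘ B from
    funext fun s => Matrix.nonsing_inv_eq_ringInverse (B s)]
  refine h.congr_deriv ?_
  simp [Matrix.coe_units_inv, hu, Matrix.mul_assoc]

theorem HasDerivAt.mulVec_const {ι κ : Type*} [Fintype ι] [Fintype κ] {M : ℝ → Matrix ι κ ℝ}
    {M' : Matrix ι κ ℝ} {t : ℝ} (hM : HasDerivAt M M' t) (c : κ → ℝ) :
    HasDerivAt (fun s => M s *ᵥ c) (M' *ᵥ c) t :=
  (LinearMap.toContinuousLinearMap ((Matrix.mulVecBilin ℝ ℝ).flip c)).hasFDerivAt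
    |>.comp_hasDerivAt (f := M) t hM

theorem hasDerivAt_inv_quadratic_mulVec {κ : Type*} [Fintype κ] [DecidableEq κ]
    {S : Matrix κ κ ℝ} (hS : IsUnit S) (P Q : Matrix κ κ ℝ) (c₀ c₁ : κ → ℝ) :
    HasDerivAt
      (fun t : ℝ => (S + t • P + t ^ 2 • Q)⁻¹ *ᵥ c₀ + t • ((S + t • P + t ^ 2 • Q)⁻¹ *ᵥ c₁))
      (S⁻¹ *ᵥ c₁ - (S⁻¹ * P * S⁻¹) *ᵥ c₀) 0 := by
  have hB : HasDerivAt (fun t : ℝ => S + t • P + t ^ 2 • Q) P 0 :=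
    (((hasDerivAt_id (0 : ℝ)).smul_const P |>.const_add S).add
      ((hasDerivAt_pow 2 (0 : ℝ)).smul_const Q)).congr_deriv (by simp)
  have hinv := hB.matrix_inv (by simpa using hS)
  refine ((hinv.mulVec_const c₀).add
    ((hasDerivAt_id (0 : ℝ)).smul (hinv.mulVec_const c₁))).congr_deriv ?_
  simp [Matrix.neg_mulVec, sub_eq_neg_add]

end MatrixCalculus

section ILS

variable {m n : ℕ} (A : Matrix (Fin m) (Fin n) ℝ) (J : Matrix (Fin m) (Fin m) ℝ) (b : Fin m → ℝ)

noncomputable def ilsDeriv (U : Matrix (Fin m) (Fin n) ℝ) : Fin n → ℝ :=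
  (Aᵀ * J * A)⁻¹ *ᵥ (Uᵀ *ᵥ (J *ᵥ ilsR A J b)) - ((Aᵀ * J * A)⁻¹ * Aᵀ * J) *ᵥ (U *ᵥ ilsX A J b)

theorem ilsX_add_smul (U : Matrix (Fin m) (Fin n) ℝ) (t : ℝ) :
    ilsX (A + t • U) J b =
      let B := Aᵀ * J * A + t • (Uᵀ * J * A + Aᵀ * J * U) + t ^ 2 • (Uᵀ * J * U)
      B⁻¹ *ᵥ ((Aᵀ * J) *ᵥ b) + t • (B⁻¹ *ᵥ ((Uᵀ * J) *ᵥ b)) := by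
  have hB : (A + t • U)ᵀ * J * (A + t • U) =
      Aᵀ * J * A + t • (Uᵀ * J * A + Aᵀ * J * U) + t ^ 2 • (Uᵀ * J * U) := by
    simp only [Matrix.transpose_add, Matrix.transpose_smul, Matrix.add_mul, Matrix.mul_add,
      Matrix.smul_mul, Matrix.mul_smul, smul_smul, smul_add, sq]
    abel
  rw [ilsX, hB, Matrix.mul_assoc, ← Matrix.mulVec_mulVec, Matrix.transpose_add,
    Matrix.transpose_smul, Matrix.add_mul, Matrix.smul_mul, Matrix.add_mulVec,
    Matrix.smul_mulVec, Matrix.mulVec_add, Matrix.mulVec_smul]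

theorem hasDerivAt_ilsX (hS : IsUnit (Aᵀ * J * A)) (U : Matrix (Fin m) (Fin n) ℝ) :
    HasDerivAt (fun t : ℝ => ilsX (A + t • U) J b) (ilsDeriv A J b U) 0 := by
  simp only [ilsX_add_smul]
  refine (hasDerivAt_inv_quadratic_mulVec hS _ _ _ _).congr_deriv ?_
  have hx : (Aᵀ * J * A)⁻¹ *ᵥ (Aᵀ *ᵥ (J *ᵥ b)) = ilsX A J b := by
    rw [ilsX, Matrix.mulVec_mulVec, Matrix.mulVec_mulVec, Matrix.mul_assoc]
  simp only [ilsDeriv, ilsR, ← Matrix.mulVec_mulVec, hx, Matrix.add_mulVec, Matrix.mulVec_add,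
    Matrix.mulVec_sub]
  exact sub_add_eq_sub_sub _ _ _

theorem ilsM1_mulVec (U : Matrix (Fin m) (Fin n) ℝ) :
    ilsM1 A J b *ᵥ (fun jk => U jk.2 jk.1) = (Aᵀ * J * A)⁻¹ *ᵥ (Uᵀ *ᵥ (J *ᵥ ilsR A J b)) := by
  ext i
  simp only [ilsM1, Matrix.mulVec, dotProduct, Matrix.of_apply, Matrix.transpose_apply,
    Fintype.sum_prod_type, Finset.mul_sum, Finset.sum_mul]
  refine Finset.sum_congr rfl fun j _ => Finset.sum_congr rfl fun k _ => ?_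
  exact Finset.sum_congr rfl fun l _ => by ring

theorem ilsM2_mulVec (U : Matrix (Fin m) (Fin n) ℝ) :
    ilsM2 A J b *ᵥ (fun jk => U jk.2 jk.1) = ((Aᵀ * J * A)⁻¹ * Aᵀ * J) *ᵥ (U *ᵥ ilsX A J b) := by
  ext i
  simp only [ilsM2, Matrix.mulVec, dotProduct, Matrix.of_apply, Fintype.sum_prod_type,
    Finset.mul_sum]
  rw [Finset.sum_comm]
  exact Finset.sum_congr rfl fun k _ => Finset.sum_congr rfl fun j _ => by ring

theorem ilsM1_sub_ilsM2_mulVec (U : Matrix (Fin m) (Fin n) ℝ) :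
    (ilsM1 A J b - ilsM2 A J b) *ᵥ (fun jk => U jk.2 jk.1) = ilsDeriv A J b U := by
  rw [Matrix.sub_mulVec, ilsM1_mulVec, ilsM2_mulVec, ilsDeriv]

end ILS

open Filter Topology in
theorem stmt_8_general (m n : ℕ) (hmn : m > n) (hn : n ≥ 1)
    (A : Matrix (Fin m) (Fin n) ℝ) (b : Fin m → ℝ)
    (J : Matrix (Fin m) (Fin m) ℝ)
    (hpd : (Aᵀ * J * A).PosDef) :
    ∃ U : Matrix (Fin m) (Fin n) ℝ, frobNorm U = 1 ∧
      Tendsto (fun t : ℝ => eNorm (ilsX (A + t • U) J b - ilsX A J b) / t)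
        (𝓝[>] 0) (𝓝 (specNorm (ilsM1 A J b - ilsM2 A J b))) := by
  have : Nonempty (Fin n × Fin m) := ⟨(⟨0, hn⟩, ⟨0, by omega⟩)⟩
  obtain ⟨v, hv, hMv⟩ :=
    exists_eNorm_eq_one_and_eNorm_mulVec_eq_specNorm (ilsM1 A J b - ilsM2 A J b)
  set U : Matrix (Fin m) (Fin n) ℝ := Matrix.of fun k j => v (j, k)
  refine ⟨U, (frobNorm_of_swap v).trans hv, hMv ▸ ?_⟩
  have h := (hasDerivAt_ilsX A J b hpd.isUnit U).tendsto_eNorm_sub_div_nhdsGT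
  rwa [← ilsM1_sub_ilsM2_mulVec, zero_smul, add_zero] at h

open Filter Topology in
/-- The spectral norm of the Jacobian is attained: there is a unit-Frobenius-norm
direction `U` with `lim_{t→0⁺} ‖f(A+tU) − f(A)‖₂ / t = ‖M₁ − M₂‖₂`. -/
theorem stmt_8 (m n : ℕ) (hmn : m > n) (hn : n ≥ 1)
    (A : Matrix (Fin m) (Fin n) ℝ) (b : Fin m → ℝ)
    (d : Fin m → ℝ) (hd : ∀ i, d i = 1 ∨ d i = -1)
    (J : Matrix (Fin m) (Fin m) ℝ) (hJ : J = Matrix.diagonal d)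
    (hpd : (Aᵀ * J * A).PosDef) :
    ∃ U : Matrix (Fin m) (Fin n) ℝ, frobNorm U = 1 ∧
      Tendsto (fun t : ℝ => eNorm (ilsX (A + t • U) J b - ilsX A J b) / t)
        (𝓝[>] 0) (𝓝 (specNorm (ilsM1 A J b - ilsM2 A J b))) :=
  stmt_8_general m n hmn hn A b J hpd
end
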